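/- Boundary quadratic identity for the skew-symmetric form on a box. Let d ≥ 1, let l, r ∈ ℝ^d with l_i ≤ r_i for all i, and set Ω = Π_{i=1}^d [l_i, r_i]. Let a, u : ℝ^d → ℝ^d be continuously differentiable on an open neighborhood of Ω. Then ∫_Ω u · ( (a·∇)u + (1/2)(div a) u ) dx = (1/2) Σ_{i=1}^d ( ∫_{F_i^+} |u|² a_i dσ − ∫_{F_i^−} |u|² a_i dσ ), where F_i^+ (resp. F_i^−) is the face of Ω on which the i-th coordinate equals r_i (resp. l_i), |u|² = u·u, and the face integrals are (d−1)-dimensional Lebesgue integrals; equivalently the left side equals (1/2) ∮_{∂Ω} |u|² (a·n̂) dσ with n̂ the outward unit normal. -/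

import Mathlib

/-! Since `∂_j |u|² = 2 u · ∂_j u`, the integrand equals `(1/2) Σ_i ∂_i (|u|² a_i)` pointwise,
so the identity is the divergence theorem on the box for the flux `|u|² a`. Mathlib
parametrizes the face `x_i = c` by `Fin n` via `Fin.insertNth`; reindexing along
`finSuccAboveEquiv i : Fin n ≃ {j // j ≠ i}`, which preserves volume, turns that into `facePt`. -/

open MeasureTheory

/-- `pd f j x` is the partial derivative `∂_j f (x)`, i.e. the `j`-th component of the
Fréchet derivative of `f : ℝ^d → ℝ` at `x`. -/
noncomputable def pd {d : ℕ} (f : (Fin d → ℝ) → ℝ) (j : Fin d) (x : Fin d → ℝ) : ℝ :=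
  fderiv ℝ f x (Pi.single j 1)

/-- `facePt i c y` is the point of `ℝ^d` whose `i`-th coordinate is `c` and whose
remaining coordinates are given by `y : ℝ^{d-1}` (indexed by `{j // j ≠ i}`): it
parametrizes the face `x_i = c` of a box by the remaining coordinates. -/
def facePt {d : ℕ} (i : Fin d) (c : ℝ) (y : {j : Fin d // j ≠ i} → ℝ) : Fin d → ℝ :=
  fun j => if h : j = i then c else y ⟨j, h⟩

open Set

section PartialDerivatives

variable {d : ℕ} {x : Fin d → ℝ}

lemma pd_mul {f g : (Fin d → ℝ) → ℝ} (hf : DifferentiableAt ℝ f x)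
    (hg : DifferentiableAt ℝ g x) (j : Fin d) :
    pd (fun y => f y * g y) j x = f x * pd g j x + g x * pd f j x := by
  simp [pd, fderiv_fun_mul hf hg]

lemma pd_sum {ι : Type*} {s : Finset ι} {f : ι → (Fin d → ℝ) → ℝ}
    (hf : ∀ k ∈ s, DifferentiableAt ℝ (f k) x) (j : Fin d) :
    pd (fun y => ∑ k ∈ s, f k y) j x = ∑ k ∈ s, pd (f k) j x := by
  simp [pd, fderiv_fun_sum hf]

lemma pd_sum_mul_self {u : (Fin d → ℝ) → Fin d → ℝ}
    (hu : ∀ k, DifferentiableAt ℝ (fun y => u y k) x) (j : Fin d) :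
    pd (fun y => ∑ k, u y k * u y k) j x = ∑ k, 2 * u x k * pd (fun y => u y k) j x := by
  rw [pd_sum (f := fun k y => u y k * u y k) fun k _ => (hu k).mul (hu k)]
  exact Finset.sum_congr rfl fun k _ => by rw [pd_mul (hu k) (hu k)]; ring

end PartialDerivatives

theorem sum_mul_skew_advection_eq_half_div {d : ℕ} {a u : (Fin d → ℝ) → Fin d → ℝ}
    {x : Fin d → ℝ} (ha : ∀ k, DifferentiableAt ℝ (fun y => a y k) x)
    (hu : ∀ k, DifferentiableAt ℝ (fun y => u y k) x) :
    ∑ i, u x i * ((∑ j, a x j * pd (fun y => u y i) j x)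
        + (1 / 2 : ℝ) * (∑ j, pd (fun y => a y j) j x) * u x i)
      = (1 / 2 : ℝ) * ∑ i, pd (fun y => (∑ k, u y k * u y k) * a y i) i x := by
  have hg : DifferentiableAt ℝ (fun y => ∑ k, u y k * u y k) x :=
    DifferentiableAt.fun_sum fun k _ => (hu k).mul (hu k)
  simp only [pd_mul hg (ha _), pd_sum_mul_self hu]
  simp only [mul_add, Finset.sum_add_distrib, Finset.mul_sum, Finset.sum_mul]
  rw [add_comm]
  congr 1 <;> rw [Finset.sum_comm] <;> exact
    Finset.sum_congr rfl fun i _ => Finset.sum_congr rfl fun j _ => by ring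

lemma setIntegral_facePt_eq {n : ℕ} (i : Fin (n + 1)) (l r : Fin (n + 1) → ℝ) (c : ℝ)
    (G : (Fin (n + 1) → ℝ) → ℝ) :
    ∫ y in Icc (fun j : {j // j ≠ i} => l j.1) (fun j => r j.1), G (facePt i c y)
      = ∫ x in Icc (l ∘ i.succAbove) (r ∘ i.succAbove), G (i.insertNth c x) := by
  set e := finSuccAboveEquiv i
  set T := MeasurableEquiv.piCongrLeft (fun _ : {j // j ≠ i} => ℝ) e
  have hT : ∀ (x : Fin n → ℝ) (k : Fin n), T x ⟨i.succAbove k, i.succAbove_ne k⟩ = x k :=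
    fun x k => MeasurableEquiv.piCongrLeft_apply_apply (β := fun _ => ℝ) e x k
  have hpre : T ⁻¹' Icc (fun j : {j // j ≠ i} => l j.1) (fun j => r j.1)
      = Icc (l ∘ i.succAbove) (r ∘ i.succAbove) := by
    ext x
    simp only [mem_preimage, mem_Icc, Pi.le_def]
    rw [← e.forall_congr_right, ← e.forall_congr_right]
    simp only [e, finSuccAboveEquiv_apply, hT, Function.comp_apply]
  have hpt : ∀ x : Fin n → ℝ, facePt i c (T x) = i.insertNth c x := by
    intro x
    funext j
    rcases eq_or_ne j i with rfl | hj
    · simp [facePt]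
    · obtain ⟨k, rfl⟩ := Fin.exists_succAbove_eq hj
      simp only [facePt, dif_neg hj, Fin.insertNth_apply_succAbove, hT]
  rw [← (volume_measurePreserving_piCongrLeft (fun _ => ℝ) e).setIntegral_preimage_emb
    T.measurableEmbedding, hpre]
  exact setIntegral_congr_fun measurableSet_Icc fun x _ => by rw [hpt]

theorem integral_sum_pd_eq_sum_face_integrals {n : ℕ} {l r : Fin (n + 1) → ℝ} (hlr : l ≤ r)
    {U : Set (Fin (n + 1) → ℝ)} (hU : IsOpen U) (hΩU : Icc l r ⊆ U)
    {F : Fin (n + 1) → (Fin (n + 1) → ℝ) → ℝ} (hF : ∀ i, ContDiffOn ℝ 1 (F i) U) :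
    ∫ x in Icc l r, ∑ i, pd (F i) i x
      = ∑ i, ((∫ y in Icc (fun j : {j // j ≠ i} => l j.1) (fun j => r j.1),
                F i (facePt i (r i) y))
              - ∫ y in Icc (fun j : {j // j ≠ i} => l j.1) (fun j => r j.1),
                F i (facePt i (l i) y)) := by
  have hIoo_subset : (pi univ fun i => Ioo (l i) (r i)) ⊆ U :=
    (pi_univ_Icc l r ▸ pi_mono fun _ _ => Ioo_subset_Icc_self).trans hΩU
  have hdiv_cont : ContinuousOn (fun x => ∑ i, pd (F i) i x) U :=
    continuousOn_finsetSum _ fun i _ =>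
      ((hF i).continuousOn_fderiv_of_isOpen hU le_rfl).clm_apply continuousOn_const
  simp only [setIntegral_facePt_eq]
  exact integral_divergence_of_hasFDerivAt_off_countable' l r hlr F (fun i => fderiv ℝ (F i)) ∅
    countable_empty (fun i => (hF i).continuousOn.mono hΩU)
    (fun x hx i => ((hF i).differentiableOn one_ne_zero x (hIoo_subset hx.1)).differentiableAt
      (hU.mem_nhds (hIoo_subset hx.1)) |>.hasFDerivAt)
    ((hdiv_cont.mono hΩU).integrableOn_compact isCompact_Icc)

theorem skew_symmetric_quadratic_boundary_identity_on_box_general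
    (d : ℕ) (l r : Fin d → ℝ) (hlr : ∀ i, l i ≤ r i)
    (a u : (Fin d → ℝ) → Fin d → ℝ)
    (U : Set (Fin d → ℝ)) (hU : IsOpen U) (hΩU : Set.Icc l r ⊆ U)
    (ha : ContDiffOn ℝ 1 a U) (hu : ContDiffOn ℝ 1 u U) :
    ∫ x in Set.Icc l r, ∑ i, u x i * ((∑ j, a x j * pd (fun y => u y i) j x)
        + (1 / 2 : ℝ) * (∑ j, pd (fun y => a y j) j x) * u x i)
      = (1 / 2 : ℝ) * ∑ i : Fin d,
          ((∫ y in Set.Icc (fun j : {j : Fin d // j ≠ i} => l j.1)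
                          (fun j : {j : Fin d // j ≠ i} => r j.1),
              (∑ k, u (facePt i (r i) y) k * u (facePt i (r i) y) k)
                * a (facePt i (r i) y) i)
           - ∫ y in Set.Icc (fun j : {j : Fin d // j ≠ i} => l j.1)
                           (fun j : {j : Fin d // j ≠ i} => r j.1),
              (∑ k, u (facePt i (l i) y) k * u (facePt i (l i) y) k)
                * a (facePt i (l i) y) i) := by
  cases d with
  | zero => simp
  | succ n =>
    have ha' : ∀ k, ContDiffOn ℝ 1 (fun y => a y k) U := contDiffOn_pi.1 ha
    have hu' : ∀ k, ContDiffOn ℝ 1 (fun y => u y k) U := contDiffOn_pi.1 hu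
    have hdiff {f : (Fin (n + 1) → ℝ) → ℝ} (hf : ContDiffOn ℝ 1 f U) {x} (hx : x ∈ Icc l r) :
        DifferentiableAt ℝ f x :=
      (hf.contDiffAt (hU.mem_nhds (hΩU hx))).differentiableAt one_ne_zero
    have hflux : ∀ i, ContDiffOn ℝ 1 (fun y => (∑ k, u y k * u y k) * a y i) U := fun i =>
      (ContDiffOn.sum fun k _ => (hu' k).mul (hu' k)).mul (ha' i)
    rw [setIntegral_congr_fun measurableSet_Icc fun x hx =>
        sum_mul_skew_advection_eq_half_div (fun k => hdiff (ha' k) hx) (fun k => hdiff (hu' k) hx),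
      integral_const_mul, integral_sum_pd_eq_sum_face_integrals hlr hU hΩU hflux]

/-- Boundary quadratic identity for the skew-symmetric form on a box
`Ω = Π_i [l_i, r_i]`: for `a, u` continuously differentiable on an open neighborhood `U`
of `Ω`,
`∫_Ω u·((a·∇)u + (1/2)(div a) u) = (1/2) Σ_i (∫_{F_i^+} |u|² a_i − ∫_{F_i^−} |u|² a_i)`,
where `F_i^±` are the faces `x_i = r_i` and `x_i = l_i`, parametrized by the remaining
coordinates ranging over `Π_{j≠i}[l_j, r_j]` with `(d−1)`-dimensional Lebesgue measure. -/
theorem skew_symmetric_quadratic_boundary_identity_on_box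
    (d : ℕ) (hd : 1 ≤ d) (l r : Fin d → ℝ) (hlr : ∀ i, l i ≤ r i)
    (a u : (Fin d → ℝ) → Fin d → ℝ)
    (U : Set (Fin d → ℝ)) (hU : IsOpen U) (hΩU : Set.Icc l r ⊆ U)
    (ha : ContDiffOn ℝ 1 a U) (hu : ContDiffOn ℝ 1 u U) :
    ∫ x in Set.Icc l r, ∑ i, u x i * ((∑ j, a x j * pd (fun y => u y i) j x)
        + (1 / 2 : ℝ) * (∑ j, pd (fun y => a y j) j x) * u x i)
      = (1 / 2 : ℝ) * ∑ i : Fin d,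
          ((∫ y in Set.Icc (fun j : {j : Fin d // j ≠ i} => l j.1)
                          (fun j : {j : Fin d // j ≠ i} => r j.1),
              (∑ k, u (facePt i (r i) y) k * u (facePt i (r i) y) k)
                * a (facePt i (r i) y) i)
           - ∫ y in Set.Icc (fun j : {j : Fin d // j ≠ i} => l j.1)
                           (fun j : {j : Fin d // j ≠ i} => r j.1),
              (∑ k, u (facePt i (l i) y) k * u (facePt i (l i) y) k)
                * a (facePt i (l i) y) i) :=
  skew_symmetric_quadratic_boundary_identity_on_box_general d l r hlr a u U hU hΩU ha hu
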